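/- Let S, L ∈ ℝ^{m×n} with Supp(S* − S) ⊆ Supp(S*), set E = S* − S, G = Σ_{i=1}^n Q_i Q_iᵀ(L − L*)e_i e_iᵀ, F = Σ_{i=1}^n Q_i Q_iᵀ(S − S*)e_i e_iᵀ, M = F + G + E, s = ‖E‖_{ℓ∞}, and l = max_i ‖G e_i‖_{ℓ2}. Then for every v ∈ ℝ^n: ‖M v‖_{ℓ∞} ≤ [ ν√(d/m)·l + (α₂ + α₁ν²d)·s ]·n·‖v‖_{ℓ∞}. -/

import Mathlib

/-! The bound is the row-sum estimate `‖Mv‖_∞ ≤ (max_p ∑_j |M_pj|) ‖v‖_∞`, applied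
entrywise to `F`, `G` and `E`. Writing `P_j = Q_j Q_jᵀ`, an entry of `G` is
`⟨Q_jᵀ e_p, Q_jᵀ (L - L*) e_j⟩`; since `Q_j` is an isometry this is at most
`ν √(d/m) · ‖G e_j‖ ≤ ν √(d/m) · l`. An entry of `F` is a sum over the at most `α₁ m`
nonzero entries of the `j`-th column of `E`, each weighted by `|(P_j)_pk| ≤ ν² d / m`.
A row of `E` has at most `α₂ n` nonzero entries, each at most `s`. -/

open Matrix
open scoped BigOperators

noncomputable def l2 {n : ℕ} (v : Fin n → ℝ) : ℝ := Real.sqrt (∑ i, v i ^ 2)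

noncomputable def vinf {n : ℕ} (v : Fin n → ℝ) : ℝ := ⨆ i, |v i|

noncomputable def linf {m n : ℕ} (X : Matrix (Fin m) (Fin n) ℝ) : ℝ := ⨆ i, ⨆ j, |X i j|

noncomputable def frob {m n : ℕ} (X : Matrix (Fin m) (Fin n) ℝ) : ℝ :=
  Real.sqrt (∑ i, ∑ j, X i j ^ 2)

noncomputable def spec {m n : ℕ} (X : Matrix (Fin m) (Fin n) ℝ) : ℝ :=
  ‖LinearMap.toContinuousLinearMap (Matrix.toEuclideanLin X)‖

def supp {m n : ℕ} (X : Matrix (Fin m) (Fin n) ℝ) : Set (Fin m × Fin n) :=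
  {p | X p.1 p.2 ≠ 0}

noncomputable def sthr {m n : ℕ} (ζ : ℝ) (X : Matrix (Fin m) (Fin n) ℝ) :
    Matrix (Fin m) (Fin n) ℝ :=
  Matrix.of fun i j => Real.sign (X i j) * max (|X i j| - ζ) 0

lemma l2_eq_sqrt_dotProduct {n : ℕ} (v : Fin n → ℝ) : l2 v = √(v ⬝ᵥ v) := by
  simp only [l2, dotProduct, sq]

lemma l2_nonneg {n : ℕ} (v : Fin n → ℝ) : 0 ≤ l2 v := Real.sqrt_nonneg _

lemma abs_dotProduct_le_l2_mul_l2 {n : ℕ} (v w : Fin n → ℝ) :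
    |v ⬝ᵥ w| ≤ l2 v * l2 w := by
  rw [l2, l2, ← Real.sqrt_mul (by positivity), ← Real.sqrt_sq_eq_abs]
  exact Real.sqrt_le_sqrt (Finset.sum_mul_sq_le_sq_mul_sq _ v w)

lemma l2_mulVec_of_transpose_mul_self {m d : ℕ} {Q : Matrix (Fin m) (Fin d) ℝ}
    (hQ : Qᵀ * Q = 1) (y : Fin d → ℝ) : l2 (Q *ᵥ y) = l2 y := by
  rw [l2_eq_sqrt_dotProduct, l2_eq_sqrt_dotProduct, dotProduct_mulVec, ← vecMul_transpose,
    vecMul_vecMul, hQ, vecMul_one]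

lemma mul_transpose_apply_eq_dotProduct {m d : ℕ} (Q : Matrix (Fin m) (Fin d) ℝ) (p k : Fin m) :
    (Q * Qᵀ) p k = (Qᵀ *ᵥ Pi.single p 1) ⬝ᵥ (Qᵀ *ᵥ Pi.single k 1) := by
  simp [mul_apply, dotProduct]

lemma mul_transpose_mulVec_apply_eq_dotProduct {m d : ℕ} (Q : Matrix (Fin m) (Fin d) ℝ)
    (x : Fin m → ℝ) (p : Fin m) :
    ((Q * Qᵀ) *ᵥ x) p = (Qᵀ *ᵥ Pi.single p 1) ⬝ᵥ (Qᵀ *ᵥ x) := by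
  rw [← mulVec_mulVec, mulVec_single_one]
  rfl

lemma sum_abs_le_card_mul {ι : Type*} [Fintype ι] {f : ι → ℝ} {T : Finset ι} {B : ℝ}
    (hT : ∀ k ∉ T, f k = 0) (hB : ∀ k ∈ T, |f k| ≤ B) : ∑ k, |f k| ≤ T.card * B := by
  rw [← Finset.sum_subset T.subset_univ fun k _ hk => by simp [hT k hk]]
  simpa using Finset.sum_le_card_nsmul T _ B hB

lemma abs_le_vinf {n : ℕ} (v : Fin n → ℝ) (j : Fin n) : |v j| ≤ vinf v :=
  le_ciSup (f := fun i => |v i|) (Finite.bddAbove_range _) j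

lemma vinf_nonneg {n : ℕ} (v : Fin n → ℝ) : 0 ≤ vinf v :=
  Real.iSup_nonneg fun _ => abs_nonneg _

lemma abs_le_linf {m n : ℕ} (X : Matrix (Fin m) (Fin n) ℝ) (i : Fin m) (j : Fin n) :
    |X i j| ≤ linf X :=
  (le_ciSup (Finite.bddAbove_range _) j).trans
    (le_ciSup (f := fun i => ⨆ j, |X i j|) (Finite.bddAbove_range _) i)

lemma linf_nonneg {m n : ℕ} (X : Matrix (Fin m) (Fin n) ℝ) : 0 ≤ linf X :=
  Real.iSup_nonneg fun _ => Real.iSup_nonneg fun _ => abs_nonneg _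

lemma apply_eq_zero_of_supp_subset {m n : ℕ} {X Y : Matrix (Fin m) (Fin n) ℝ}
    (h : supp X ⊆ supp Y) {i : Fin m} {j : Fin n} (hY : Y i j = 0) : X i j = 0 :=
  not_not.1 fun hX => h (show (i, j) ∈ supp X from hX) hY

lemma supp_neg {m n : ℕ} (X : Matrix (Fin m) (Fin n) ℝ) : supp (-X) = supp X := by
  ext; simp [supp]

lemma sum_abs_row_le_of_supp_subset {m n : ℕ} {X Y : Matrix (Fin m) (Fin n) ℝ} {s α : ℝ}
    (hXY : supp X ⊆ supp Y) (hs : 0 ≤ s) (hXs : ∀ i j, |X i j| ≤ s)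
    (hY : ∀ i, ((Finset.univ.filter fun j => Y i j ≠ 0).card : ℝ) ≤ α * n) (i : Fin m) :
    ∑ j, |X i j| ≤ α * n * s :=
  (sum_abs_le_card_mul (fun j hj => apply_eq_zero_of_supp_subset hXY (by simpa using hj))
    fun j _ => hXs i j).trans (mul_le_mul_of_nonneg_right (hY i) hs)

lemma vinf_mulVec_le {m n : ℕ} (hm : 0 < m) (A : Matrix (Fin m) (Fin n) ℝ) (v : Fin n → ℝ)
    {R : ℝ} (hR : ∀ p, ∑ j, |A p j| ≤ R) : vinf (A *ᵥ v) ≤ R * vinf v := by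
  have : Nonempty (Fin m) := ⟨⟨0, hm⟩⟩
  refine ciSup_le fun p => ?_
  calc |(A *ᵥ v) p| ≤ ∑ j, |A p j| * |v j| := by
        simpa only [mulVec, dotProduct, abs_mul] using
          Finset.abs_sum_le_sum_abs (fun j => A p j * v j) Finset.univ
    _ ≤ ∑ j, |A p j| * vinf v := by gcongr with j; exact abs_le_vinf v j
    _ ≤ R * vinf v := by
        rw [← Finset.sum_mul]
        exact mul_le_mul_of_nonneg_right (hR p) (vinf_nonneg v)

noncomputable def colProj {m n d : ℕ} (Q : Fin n → Matrix (Fin m) (Fin d) ℝ)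
    (X : Matrix (Fin m) (Fin n) ℝ) : Matrix (Fin m) (Fin n) ℝ :=
  Matrix.of fun p j => ((Q j * (Q j)ᵀ) *ᵥ fun r => X r j) p

section colProj

variable {m n d : ℕ} {Q : Fin n → Matrix (Fin m) (Fin d) ℝ}

lemma sum_vecMulVec_single_eq_colProj (X : Matrix (Fin m) (Fin n) ℝ) :
    ∑ i, vecMulVec ((Q i * (Q i)ᵀ) *ᵥ fun p => X p i) (Pi.single i 1) = colProj Q X := by
  ext p j
  simp [Matrix.sum_apply, vecMulVec_apply, Pi.single_apply, colProj]

lemma colProj_apply (X : Matrix (Fin m) (Fin n) ℝ) (p : Fin m) (j : Fin n) :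
    colProj Q X p j = ∑ k, (Q j * (Q j)ᵀ) p k * X k j :=
  rfl

lemma abs_mul_transpose_apply_le {C : ℝ} (hQC : ∀ p j, l2 ((Q j)ᵀ *ᵥ Pi.single p 1) ≤ C)
    (j : Fin n) (p k : Fin m) : |(Q j * (Q j)ᵀ) p k| ≤ C ^ 2 := by
  rw [mul_transpose_apply_eq_dotProduct, sq]
  exact (abs_dotProduct_le_l2_mul_l2 _ _).trans
    (mul_le_mul (hQC p j) (hQC k j) (l2_nonneg _) ((l2_nonneg _).trans (hQC p j)))

lemma abs_colProj_apply_le {C : ℝ} (hQ : ∀ j, (Q j)ᵀ * Q j = 1)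
    (hQC : ∀ p j, l2 ((Q j)ᵀ *ᵥ Pi.single p 1) ≤ C) (X : Matrix (Fin m) (Fin n) ℝ)
    (p : Fin m) (j : Fin n) : |colProj Q X p j| ≤ C * ⨆ i, l2 (fun r => colProj Q X r i) := by
  have hcol : (fun r => colProj Q X r j) = Q j *ᵥ ((Q j)ᵀ *ᵥ fun r => X r j) := by
    simp [colProj, mulVec_mulVec]
  have hC : 0 ≤ C := (l2_nonneg _).trans (hQC p j)
  calc |colProj Q X p j|
        ≤ l2 ((Q j)ᵀ *ᵥ Pi.single p 1) * l2 ((Q j)ᵀ *ᵥ fun r => X r j) := by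
        rw [colProj, of_apply, mul_transpose_mulVec_apply_eq_dotProduct]
        exact abs_dotProduct_le_l2_mul_l2 _ _
    _ ≤ C * l2 (fun r => colProj Q X r j) := by
        rw [hcol, l2_mulVec_of_transpose_mul_self (hQ j)]
        exact mul_le_mul_of_nonneg_right (hQC p j) (l2_nonneg _)
    _ ≤ C * ⨆ i, l2 (fun r => colProj Q X r i) :=
        mul_le_mul_of_nonneg_left
          (le_ciSup (f := fun i => l2 fun r => colProj Q X r i) (Finite.bddAbove_range _) j) hC

lemma abs_colProj_apply_le_of_supp_subset {C s α : ℝ}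
    (hQC : ∀ p j, l2 ((Q j)ᵀ *ᵥ Pi.single p 1) ≤ C) {X Y : Matrix (Fin m) (Fin n) ℝ}
    (hXY : supp X ⊆ supp Y) (hXs : ∀ k j, |X k j| ≤ s)
    (hY : ∀ j, ((Finset.univ.filter fun k => Y k j ≠ 0).card : ℝ) ≤ α * m)
    (p : Fin m) (j : Fin n) : |colProj Q X p j| ≤ α * m * (C ^ 2 * s) := by
  have hs : 0 ≤ s := (abs_nonneg _).trans (hXs p j)
  calc |colProj Q X p j| ≤ ∑ k, |(Q j * (Q j)ᵀ) p k * X k j| := by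
        rw [colProj_apply]
        exact Finset.abs_sum_le_sum_abs _ _
    _ ≤ (Finset.univ.filter fun k => Y k j ≠ 0).card * (C ^ 2 * s) := by
        refine sum_abs_le_card_mul (fun k hk => ?_) fun k _ => ?_
        · simp [apply_eq_zero_of_supp_subset hXY (by simpa using hk)]
        · rw [abs_mul]
          exact mul_le_mul (abs_mul_transpose_apply_le hQC j p k) (hXs k j) (abs_nonneg _)
            (sq_nonneg C)
    _ ≤ α * m * (C ^ 2 * s) := mul_le_mul_of_nonneg_right (hY j) (by positivity)

end colProj

theorem stmt3_general (m n d : ℕ) (hm : 0 < m)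
    (ν α₁ α₂ : ℝ)
    (Q : Fin n → Matrix (Fin m) (Fin d) ℝ)
    (hQortho : ∀ i, (Q i)ᵀ * Q i = 1)
    (hQe : ∀ (p : Fin m) (j : Fin n),
      l2 ((Q j)ᵀ *ᵥ Pi.single p 1) ≤ ν * Real.sqrt ((d : ℝ) / m))
    (Lstar Sstar S L : Matrix (Fin m) (Fin n) ℝ)
    (hScol : ∀ j : Fin n,
      ((Finset.univ.filter fun i => Sstar i j ≠ 0).card : ℝ) ≤ α₁ * m)
    (hSrow : ∀ i : Fin m,
      ((Finset.univ.filter fun j => Sstar i j ≠ 0).card : ℝ) ≤ α₂ * n)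
    (hsupp : supp (Sstar - S) ⊆ supp Sstar)
    (E G F Mm : Matrix (Fin m) (Fin n) ℝ) (s l : ℝ)
    (hE : E = Sstar - S)
    (hG : G = ∑ i, Matrix.vecMulVec
        ((Q i * (Q i)ᵀ) *ᵥ fun p => (L - Lstar) p i) (Pi.single i 1))
    (hF : F = ∑ i, Matrix.vecMulVec
        ((Q i * (Q i)ᵀ) *ᵥ fun p => (S - Sstar) p i) (Pi.single i 1))
    (hM : Mm = F + G + E)
    (hs : s = linf E)
    (hl : l = ⨆ i, l2 fun p => G p i) :
    ∀ v : Fin n → ℝ,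
      vinf (Mm *ᵥ v) ≤
        (ν * Real.sqrt ((d : ℝ) / m) * l + (α₂ + α₁ * ν ^ 2 * d) * s) * n * vinf v := by
  intro v
  rw [sum_vecMulVec_single_eq_colProj] at hF hG
  set C := ν * Real.sqrt ((d : ℝ) / m)
  have hEs : ∀ k j, |E k j| ≤ s := hs ▸ abs_le_linf E
  have hG_le : ∀ p j, |G p j| ≤ C * l := hl ▸ hG ▸ abs_colProj_apply_le hQortho hQe _
  have hC : C ^ 2 * m = ν ^ 2 * d := by
    rw [mul_pow, Real.sq_sqrt (by positivity)]
    field_simp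
  have hF_le : ∀ p j, |F p j| ≤ α₁ * m * (C ^ 2 * s) := by
    rw [hF, ← neg_sub]
    refine abs_colProj_apply_le_of_supp_subset hQe (by rwa [supp_neg]) (fun k j => ?_) hScol
    rw [neg_apply, abs_neg, ← hE]
    exact hEs k j
  have hE_row : ∀ p, ∑ j, |E p j| ≤ α₂ * n * s :=
    sum_abs_row_le_of_supp_subset (hE ▸ hsupp) (hs ▸ linf_nonneg E) hEs hSrow
  refine hM ▸ vinf_mulVec_le hm _ v fun p => ?_
  calc ∑ j, |(F + G + E) p j| ≤ ∑ j, (|F p j| + |G p j| + |E p j|) :=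
        Finset.sum_le_sum fun j _ => abs_add_three _ _ _
    _ ≤ ∑ j : Fin n, α₁ * m * (C ^ 2 * s) + ∑ j : Fin n, C * l + α₂ * n * s := by
        simp only [Finset.sum_add_distrib]
        gcongr with j _ j
        · exact hF_le p j
        · exact hG_le p j
        · exact hE_row p
    _ = (C * l + (α₂ + α₁ * ν ^ 2 * d) * s) * n := by
        simp only [Finset.sum_const, Finset.card_univ, Fintype.card_fin, nsmul_eq_mul]
        linear_combination α₁ * s * n * hC

/-- Lemma 3 of the paper: bound on `‖Mv‖_{ℓ∞}`. -/
theorem stmt3 (m n d : ℕ) (hm : 0 < m) (hn : 0 < n) (hd : 0 < d)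
    (ν α₁ α₂ : ℝ) (hν : 0 < ν) (hα₁ : 0 < α₁) (hα₂ : 0 < α₂)
    (Q : Fin n → Matrix (Fin m) (Fin d) ℝ)
    (hQortho : ∀ i, (Q i)ᵀ * Q i = 1)
    (hQe : ∀ (p : Fin m) (j : Fin n),
      l2 ((Q j)ᵀ *ᵥ Pi.single p 1) ≤ ν * Real.sqrt ((d : ℝ) / m))
    (Lstar Sstar S L : Matrix (Fin m) (Fin n) ℝ)
    (hScol : ∀ j : Fin n,
      ((Finset.univ.filter fun i => Sstar i j ≠ 0).card : ℝ) ≤ α₁ * m)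
    (hSrow : ∀ i : Fin m,
      ((Finset.univ.filter fun j => Sstar i j ≠ 0).card : ℝ) ≤ α₂ * n)
    (hsupp : supp (Sstar - S) ⊆ supp Sstar)
    (E G F Mm : Matrix (Fin m) (Fin n) ℝ) (s l : ℝ)
    (hE : E = Sstar - S)
    (hG : G = ∑ i, Matrix.vecMulVec
        ((Q i * (Q i)ᵀ) *ᵥ fun p => (L - Lstar) p i) (Pi.single i 1))
    (hF : F = ∑ i, Matrix.vecMulVec
        ((Q i * (Q i)ᵀ) *ᵥ fun p => (S - Sstar) p i) (Pi.single i 1))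
    (hM : Mm = F + G + E)
    (hs : s = linf E)
    (hl : l = ⨆ i, l2 fun p => G p i) :
    ∀ v : Fin n → ℝ,
      vinf (Mm *ᵥ v) ≤
        (ν * Real.sqrt ((d : ℝ) / m) * l + (α₂ + α₁ * ν ^ 2 * d) * s) * n * vinf v :=
  stmt3_general m n d hm ν α₁ α₂ Q hQortho hQe Lstar Sstar S L hScol hSrow hsupp E G F Mm s l hE hG
    hF hM hs hl
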